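/- In the polynomial ring R = ℚ[y_0, y_12, y_13, y_14, y_15, y_23, y_24, y_25, y_34, y_35, y_45, y_1234, y_1235, y_1245, y_1345, y_2345], let zb_1 = y_15·y_1234 − y_14·y_1235 + y_13·y_1245 − y_12·y_1345, zb_2 = y_25·y_1234 − y_24·y_1235 + y_23·y_1245 − y_12·y_2345, zb_3 = y_35·y_1234 − y_34·y_1235 + y_23·y_1345 − y_13·y_2345, zb_4 = y_45·y_1234 − y_34·y_1245 + y_24·y_1345 − y_14·y_2345, zb_5 = y_45·y_1235 − y_35·y_1245 + y_25·y_1345 − y_15·y_2345, and z_5 = y_0·y_1234 − y_34·y_12 + y_24·y_13 − y_23·y_14. Then the colon ideal (zb_1, zb_2, zb_3, zb_4) : (zb_1, ..., zb_5) contains the ideal (zb_1, zb_2, zb_3, zb_4, z_5, y_1234); equivalently (zb_1,...,zb_5)·(zb_1, zb_2, zb_3, zb_4, z_5, y_1234) ⊆ (zb_1, zb_2, zb_3, zb_4). -/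
import Mathlib

noncomputable section

open MvPolynomial

/-- The polynomial ring `ℚ[y_0, y_12, …, y_45, y_1234, …, y_2345]` in 16 variables. -/
abbrev E6Ring := MvPolynomial (Fin 16) ℚ

def y0 : E6Ring := X 0
def y12 : E6Ring := X 1
def y13 : E6Ring := X 2
def y14 : E6Ring := X 3
def y15 : E6Ring := X 4
def y23 : E6Ring := X 5
def y24 : E6Ring := X 6
def y25 : E6Ring := X 7
def y34 : E6Ring := X 8
def y35 : E6Ring := X 9
def y45 : E6Ring := X 10
def y1234 : E6Ring := X 11
def y1235 : E6Ring := X 12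
def y1245 : E6Ring := X 13
def y1345 : E6Ring := X 14
def y2345 : E6Ring := X 15

def zb1 : E6Ring := y15 * y1234 - y14 * y1235 + y13 * y1245 - y12 * y1345
def zb2 : E6Ring := y25 * y1234 - y24 * y1235 + y23 * y1245 - y12 * y2345
def zb3 : E6Ring := y35 * y1234 - y34 * y1235 + y23 * y1345 - y13 * y2345
def zb4 : E6Ring := y45 * y1234 - y34 * y1245 + y24 * y1345 - y14 * y2345
def zb5 : E6Ring := y45 * y1235 - y35 * y1245 + y25 * y1345 - y15 * y2345
def z5 : E6Ring := y0 * y1234 - y34 * y12 + y24 * y13 - y23 * y14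

namespace E6aux

lemma h1 : zb1 ∈ Ideal.span ({zb1, zb2, zb3, zb4} : Set E6Ring) :=
  Ideal.subset_span (by simp)
lemma h2 : zb2 ∈ Ideal.span ({zb1, zb2, zb3, zb4} : Set E6Ring) :=
  Ideal.subset_span (by simp)
lemma h3 : zb3 ∈ Ideal.span ({zb1, zb2, zb3, zb4} : Set E6Ring) :=
  Ideal.subset_span (by simp)
lemma h4 : zb4 ∈ Ideal.span ({zb1, zb2, zb3, zb4} : Set E6Ring) :=
  Ideal.subset_span (by simp)

lemma key1 : y1234 * zb5 ∈ Ideal.span ({zb1, zb2, zb3, zb4} : Set E6Ring) := by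
  have e : y1234 * zb5 =
      (-y2345) * zb1 + y1345 * zb2 + (-y1245) * zb3 + y1235 * zb4 := by
    simp only [zb1, zb2, zb3, zb4, zb5, y1234, y1235, y1245, y1345, y2345,
      y12, y13, y14, y15, y23, y24, y25, y34, y35, y45]
    ring
  rw [e]
  exact add_mem (add_mem (add_mem (Ideal.mul_mem_left _ _ h1)
    (Ideal.mul_mem_left _ _ h2)) (Ideal.mul_mem_left _ _ h3))
    (Ideal.mul_mem_left _ _ h4)

lemma key2 : z5 * zb5 ∈ Ideal.span ({zb1, zb2, zb3, zb4} : Set E6Ring) := by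
  have e : z5 * zb5 =
      (-(y0 * y2345) + y23 * y45 - y24 * y35 + y25 * y34) * zb1 +
      (y0 * y1345 - y13 * y45 + y14 * y35 - y15 * y34) * zb2 +
      (-(y0 * y1245) + y12 * y45 - y14 * y25 + y15 * y24) * zb3 +
      (y0 * y1235 - y12 * y35 + y13 * y25 - y15 * y23) * zb4 := by
    simp only [z5, zb1, zb2, zb3, zb4, zb5, y0, y1234, y1235, y1245, y1345, y2345,
      y12, y13, y14, y15, y23, y24, y25, y34, y35, y45]
    ring
  rw [e]
  exact add_mem (add_mem (add_mem (Ideal.mul_mem_left _ _ h1)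
    (Ideal.mul_mem_left _ _ h2)) (Ideal.mul_mem_left _ _ h3))
    (Ideal.mul_mem_left _ _ h4)

lemma gen_mul {g : E6Ring}
    (hg : g * zb5 ∈ Ideal.span ({zb1, zb2, zb3, zb4} : Set E6Ring)) :
    ∀ p ∈ Ideal.span ({zb1, zb2, zb3, zb4, zb5} : Set E6Ring),
      g * p ∈ Ideal.span ({zb1, zb2, zb3, zb4} : Set E6Ring) := by
  intro p hp
  induction hp using Submodule.span_induction with
  | mem x hx =>
    simp only [Set.mem_insert_iff, Set.mem_singleton_iff] at hx
    rcases hx with rfl | rfl | rfl | rfl | rfl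
    · exact Ideal.mul_mem_left _ _ h1
    · exact Ideal.mul_mem_left _ _ h2
    · exact Ideal.mul_mem_left _ _ h3
    · exact Ideal.mul_mem_left _ _ h4
    · exact hg
  | zero => simp
  | add x y _ _ hx hy => rw [mul_add]; exact add_mem hx hy
  | smul r x _ hx =>
    rw [smul_eq_mul, mul_left_comm]
    exact Ideal.mul_mem_left _ _ hx

end E6aux

open E6aux in
/-- The colon ideal `(zb₁, zb₂, zb₃, zb₄) : (zb₁, …, zb₅)` contains the ideal
`(zb₁, zb₂, zb₃, zb₄, z₅, y_1234)`; equivalently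
`(zb₁,…,zb₅)·(zb₁, zb₂, zb₃, zb₄, z₅, y_1234) ⊆ (zb₁, zb₂, zb₃, zb₄)`. -/
theorem e6_linkage_containment :
    Ideal.span {zb1, zb2, zb3, zb4, z5, y1234} ≤
      (Ideal.span {zb1, zb2, zb3, zb4}).colon (Ideal.span {zb1, zb2, zb3, zb4, zb5})
    ∧ Ideal.span {zb1, zb2, zb3, zb4, zb5} *
        Ideal.span {zb1, zb2, zb3, zb4, z5, y1234} ≤
      Ideal.span {zb1, zb2, zb3, zb4} := by
  have hcolon : Ideal.span ({zb1, zb2, zb3, zb4, z5, y1234} : Set E6Ring) ≤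
      (Ideal.span {zb1, zb2, zb3, zb4}).colon
        (Ideal.span {zb1, zb2, zb3, zb4, zb5}) := by
    rw [Ideal.span_le]
    intro g hg
    rw [SetLike.mem_coe, Submodule.mem_colon]
    have hg5 : g * zb5 ∈ Ideal.span ({zb1, zb2, zb3, zb4} : Set E6Ring) := by
      simp only [Set.mem_insert_iff, Set.mem_singleton_iff] at hg
      rcases hg with rfl | rfl | rfl | rfl | rfl | rfl
      · exact Ideal.mul_mem_right _ _ h1
      · exact Ideal.mul_mem_right _ _ h2
      · exact Ideal.mul_mem_right _ _ h3
      · exact Ideal.mul_mem_right _ _ h4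
      · exact key2
      · exact key1
    intro p hp
    rw [smul_eq_mul]
    exact gen_mul hg5 p hp
  refine ⟨hcolon, ?_⟩
  rw [Ideal.mul_le]
  intro r hr s hs
  have h := hcolon hs
  rw [Submodule.mem_colon] at h
  have h2 := h r hr
  rw [smul_eq_mul] at h2
  rwa [mul_comm]

end
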